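/- arXiv:1405.7024 — 5 statements merged into one kernel-verified Lean document; each statement's English description precedes it below -/
import Mathlib

section
/- Let V be a nonzero finite-dimensional vector space over a field k of characteristic 0, let A : V → V be linear, and let π be a monic irreducible polynomial over k of degree r with π(A) = 0 on V. Then V is an internal direct sum V = U_1 ⊕ ⋯ ⊕ U_ℓ of A-invariant subspaces, where each U_i has a basis of the form {u_i, Au_i, …, A^{r−1}u_i} (an A-cyclic subspace of dimension r) and the minimal polynomial of A restricted to each U_i is π. In particular r divides dim V. -/
/-!
Since `π` is irreducible, `K = k[X]/(π)` is a field of degree `r` over `k`, and `π(A) = 0`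
makes `V` a `K`-vector space on which the class of `X` acts as `A`. For `v ≠ 0` the `K`-line
`K v` is then exactly the `k`-span of `v, A v, …, A^(r-1) v`, and these vectors are
`k`-independent because `1, X, …, X^(r-1)` is a `k`-basis of `K`. A `K`-basis of `V` therefore
splits `V` into such cyclic pieces, on each of which the minimal polynomial divides the
irreducible `π`, hence equals it.
-/

open Polynomial

theorem Module.End.aeval_restrict_apply {k V : Type*} [CommSemiring k] [AddCommMonoid V]
    [Module k V] {A : V →ₗ[k] V} {U : Submodule k V} (hU : ∀ x ∈ U, A x ∈ U) (p : k[X])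
    (x : U) :
    (aeval (A.restrict hU) p x : V) = aeval A p x := by
  induction p using Polynomial.induction_on' with
  | add p q hp hq => simp [hp, hq]
  | monomial n a => simp [aeval_monomial, Module.End.pow_restrict n hU, LinearMap.restrict_apply]

theorem minpoly_restrict_eq_of_irreducible {k V : Type*} [Field k] [AddCommGroup V] [Module k V]
    {A : V →ₗ[k] V} {π : k[X]} (hmonic : π.Monic) (hirr : Irreducible π)
    (hπA : aeval A π = 0) {U : Submodule k V} (hU0 : U ≠ ⊥) (hU : ∀ x ∈ U, A x ∈ U) :
    minpoly k (A.restrict hU) = π := by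
  have := Submodule.nontrivial_iff_ne_bot.2 hU0
  refine (minpoly.eq_of_irreducible_of_monic hirr ?_ hmonic).symm
  ext x
  simp [Module.End.aeval_restrict_apply, hπA]

theorem Module.Basis.isInternal_span_singleton {ι R M : Type*} [DecidableEq ι] [Ring R]
    [AddCommGroup M] [Module R M] (b : Module.Basis ι R M) :
    DirectSum.IsInternal fun i => R ∙ b i :=
  DirectSum.isInternal_submodule_of_iSupIndep_of_iSup_eq_top
    b.linearIndependent.iSupIndep_span_singleton
    (by rw [← Submodule.span_range_eq_iSup, b.span_eq])

theorem LinearMap.pow_apply_eq_pow_smul {k K V : Type*} [CommSemiring k] [Monoid K]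
    [AddCommMonoid V] [Module k V] [MulAction K V] {A : V →ₗ[k] V} {θ : K}
    (hA : ∀ v, A v = θ • v) (n : ℕ) (v : V) : (A ^ n) v = θ ^ n • v := by
  induction n with
  | zero => simp
  | succ n ih => rw [pow_succ', Module.End.mul_apply, ih, hA, pow_succ', mul_smul]

namespace PowerBasis

variable {k K V : Type*} [CommRing k] [CommRing K] [Algebra k K] [AddCommGroup V] [Module k V]
  [Module K V] [IsScalarTower k K V] (pb : PowerBasis k K) {A : V →ₗ[k] V}

theorem span_pow_apply_eq_span_singleton (hA : ∀ v, A v = pb.gen • v) (v : V) :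
    Submodule.span k (Set.range fun j : Fin pb.dim => (A ^ (j : ℕ)) v) =
      (K ∙ v).restrictScalars k := by
  have hcomp : (fun j : Fin pb.dim => (A ^ (j : ℕ)) v) =
      (LinearMap.toSpanSingleton K V v).restrictScalars k ∘ pb.basis := by
    ext j
    simp [LinearMap.pow_apply_eq_pow_smul hA]
  rw [hcomp, Set.range_comp, Submodule.span_image, pb.basis.span_eq, Submodule.map_top,
    LinearMap.range_restrictScalars, LinearMap.span_singleton_eq_range]

theorem span_pow_apply_ne_bot (hA : ∀ v, A v = pb.gen • v) {v : V} (hv : v ≠ 0) :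
    Submodule.span k (Set.range fun j : Fin pb.dim => (A ^ (j : ℕ)) v) ≠ ⊥ := by
  simpa [span_pow_apply_eq_span_singleton pb hA] using hv

theorem apply_mem_span_pow_apply (hA : ∀ v, A v = pb.gen • v) (v : V) :
    ∀ x ∈ Submodule.span k (Set.range fun j : Fin pb.dim => (A ^ (j : ℕ)) v),
      A x ∈ Submodule.span k (Set.range fun j : Fin pb.dim => (A ^ (j : ℕ)) v) := by
  rw [span_pow_apply_eq_span_singleton pb hA]
  intro x hx
  rw [hA]
  exact Submodule.smul_mem (K ∙ v) pb.gen hx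

theorem linearIndependent_pow_apply [IsDomain K] [Module.IsTorsionFree K V]
    (hA : ∀ v, A v = pb.gen • v) {v : V} (hv : v ≠ 0) :
    LinearIndependent k fun j : Fin pb.dim => (A ^ (j : ℕ)) v := by
  have hinj : Function.Injective ((LinearMap.toSpanSingleton K V v).restrictScalars k) :=
    smul_left_injective K hv
  simpa [Function.comp_def, LinearMap.pow_apply_eq_pow_smul hA] using
    pb.basis.linearIndependent.map' _ (LinearMap.ker_eq_bot.2 hinj)

theorem isInternal_span_pow_apply {ι : Type*} [DecidableEq ι] (hA : ∀ v, A v = pb.gen • v)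
    (b : Module.Basis ι K V) :
    DirectSum.IsInternal fun i =>
      Submodule.span k (Set.range fun j : Fin pb.dim => (A ^ (j : ℕ)) (b i)) := by
  simp_rw [span_pow_apply_eq_span_singleton pb hA]
  -- `IsInternal` only sees the underlying additive subgroups, which `restrictScalars` keeps.
  exact b.isInternal_span_singleton

end PowerBasis

theorem stmt_5_general {k V : Type*} [Field k] [AddCommGroup V] [Module k V]
    [FiniteDimensional k V] (A : V →ₗ[k] V) (π : k[X]) (hmonic : π.Monic)
    (hirr : Irreducible π) (r : ℕ) (hr : π.natDegree = r) (hπA : aeval A π = 0) :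
    (∃ (ℓ : ℕ) (u : Fin ℓ → V),
      DirectSum.IsInternal
        (fun i : Fin ℓ => Submodule.span k (Set.range fun j : Fin r => (A ^ (j : ℕ)) (u i))) ∧
      (∀ i : Fin ℓ, LinearIndependent k (fun j : Fin r => (A ^ (j : ℕ)) (u i))) ∧
      (∀ i : Fin ℓ,
        ∀ x ∈ Submodule.span k (Set.range fun j : Fin r => (A ^ (j : ℕ)) (u i)),
          A x ∈ Submodule.span k (Set.range fun j : Fin r => (A ^ (j : ℕ)) (u i))) ∧
      (∀ (i : Fin ℓ)
        (hU : ∀ x ∈ Submodule.span k (Set.range fun j : Fin r => (A ^ (j : ℕ)) (u i)),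
          A x ∈ Submodule.span k (Set.range fun j : Fin r => (A ^ (j : ℕ)) (u i))),
        minpoly k (A.restrict hU) = π)) ∧
    r ∣ Module.finrank k V := by
  subst hr
  have := Fact.mk hirr
  let K := AdjoinRoot π
  let pb : PowerBasis k K := AdjoinRoot.powerBasis hmonic.ne_zero
  let φ : K →ₐ[k] Module.End k V := Ideal.Quotient.liftₐ _ (aeval A) fun p hp => by
    obtain ⟨q, rfl⟩ := Ideal.mem_span_singleton'.1 hp
    simp [hπA]
  let _ : Module K V := Module.compHom V φ.toRingHom
  have : IsScalarTower k K V :=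
    ⟨fun a x v => show φ (a • x) v = a • φ x v by rw [map_smul]; rfl⟩
  have hA : ∀ v, A v = pb.gen • v := fun v => by
    show A v = aeval A X v
    simp
  have : FiniteDimensional k K := pb.finite
  have : FiniteDimensional K V := .right k K V
  let b := Module.finBasis K V
  refine ⟨⟨_, b, pb.isInternal_span_pow_apply hA b,
    fun i => pb.linearIndependent_pow_apply hA (b.ne_zero i),
    fun i => pb.apply_mem_span_pow_apply hA (b i),
    fun i hU => minpoly_restrict_eq_of_irreducible hmonic hirr hπA
      (pb.span_pow_apply_ne_bot hA (b.ne_zero i)) hU⟩, ?_⟩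
  exact ⟨Module.finrank K V, by rw [← Module.finrank_mul_finrank k K V, pb.finrank]; rfl⟩

/-- If `π` is a monic irreducible polynomial of degree `r` with `π(A) = 0` on a
nonzero finite-dimensional space `V`, then `V` is an internal direct sum of `A`-invariant
subspaces `U i`, each having a basis `u i, A (u i), …, A^(r-1) (u i)` (an `A`-cyclic subspace of
dimension `r`), the minimal polynomial of `A` restricted to each `U i` being `π`.
In particular `r` divides `dim V`. -/
theorem stmt_5 {k V : Type*} [Field k] [CharZero k] [AddCommGroup V] [Module k V]
    [FiniteDimensional k V] [Nontrivial V] (A : V →ₗ[k] V) (π : k[X]) (hmonic : π.Monic)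
    (hirr : Irreducible π) (r : ℕ) (hr : π.natDegree = r) (hπA : aeval A π = 0) :
    (∃ (ℓ : ℕ) (u : Fin ℓ → V),
      DirectSum.IsInternal
        (fun i : Fin ℓ => Submodule.span k (Set.range fun j : Fin r => (A ^ (j : ℕ)) (u i))) ∧
      (∀ i : Fin ℓ, LinearIndependent k (fun j : Fin r => (A ^ (j : ℕ)) (u i))) ∧
      (∀ i : Fin ℓ,
        ∀ x ∈ Submodule.span k (Set.range fun j : Fin r => (A ^ (j : ℕ)) (u i)),
          A x ∈ Submodule.span k (Set.range fun j : Fin r => (A ^ (j : ℕ)) (u i))) ∧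
      (∀ (i : Fin ℓ)
        (hU : ∀ x ∈ Submodule.span k (Set.range fun j : Fin r => (A ^ (j : ℕ)) (u i)),
          A x ∈ Submodule.span k (Set.range fun j : Fin r => (A ^ (j : ℕ)) (u i))),
        minpoly k (A.restrict hU) = π)) ∧
    r ∣ Module.finrank k V :=
  stmt_5_general A π hmonic hirr r hr hπA
end

section
/- Let V be a finite-dimensional vector space over a field k of characteristic 0, let A : V → V be linear, and let p be the square-free part of the characteristic polynomial χ_A, with M the least positive integer such that χ_A divides p^M. Then there exist polynomials r_1, …, r_{M−1} over k, each of degree strictly less than deg p, such that the operator S = A + Σ_{j=1}^{M−1} r_j(A) p(A)^j satisfies p(S) = 0. Consequently S is semisimple, S commutes with A, and N = A − S is nilpotent; thus A = S + N is the Jordan (Jordan–Chevalley) decomposition of A, with both S and N polynomials in A. -/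
/-!
The square-free part `p` of `χ_A` is separable in characteristic `0`, so Newton's method in
`k[X] ⧸ (p ^ M)`, started at `X`, converges to a root `g` of `p` with `g ≡ X` modulo `p`.
Truncating the base-`p` expansion of `(g - X) / p` to its first `M - 1` digits `r_j` changes
`g` only modulo `p ^ M`. Since `χ_A ∣ p ^ M ∣ p ∘ g`, the operator `S = g(A)` is killed by
the square-free `p`, hence semisimple, and `A - S = (X - g)(A)` is nilpotent because `p ∣ X - g`.
-/

open Polynomial

namespace Polynomial

section CommRing

variable {R : Type*} [CommRing R]

theorem exists_digits_pow_dvd_sub [Nontrivial R] {p : R[X]} (hp : p.Monic) (n : ℕ) (h : R[X]) :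
    ∃ r : Fin n → R[X], (∀ j, (r j).degree < p.degree) ∧
      p ^ n ∣ h - ∑ j, r j * p ^ (j : ℕ) := by
  induction n generalizing h with
  | zero => exact ⟨Fin.elim0, fun j => j.elim0, by simp⟩
  | succ n ih =>
    obtain ⟨r, hr, hdvd⟩ := ih (h /ₘ p)
    set r' : Fin (n + 1) → R[X] := Fin.cons (h %ₘ p) r
    refine ⟨r', Fin.cases (by simpa [r'] using degree_modByMonic_lt h hp)
      (by simpa [r'] using hr), ?_⟩
    have hsum : ∑ j, r' j * p ^ (j : ℕ) = h %ₘ p + p * ∑ j, r j * p ^ (j : ℕ) := by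
      rw [Fin.sum_univ_succ, Finset.mul_sum]
      simp only [r', Fin.cons_zero, Fin.cons_succ, Fin.val_zero, Fin.val_succ, pow_zero, mul_one]
      exact congrArg (h %ₘ p + ·) (Finset.sum_congr rfl fun j _ => by ring)
    have hsplit : h - (h %ₘ p + p * ∑ j, r j * p ^ (j : ℕ))
        = p * (h /ₘ p - ∑ j, r j * p ^ (j : ℕ)) := by
      linear_combination -modByMonic_add_div h p
    rw [hsum, hsplit, pow_succ']
    exact mul_dvd_mul_left p hdvd

theorem exists_isNilpotent_root_sub_aeval_eq_zero {p : R[X]} (hp : p.Separable) (n : ℕ) :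
    ∃ s : AdjoinRoot (p ^ n), IsNilpotent (AdjoinRoot.root (p ^ n) - s) ∧ aeval s p = 0 := by
  have hnil : IsNilpotent (aeval (AdjoinRoot.root (p ^ n)) p) :=
    ⟨n, by rw [AdjoinRoot.aeval_eq, ← map_pow, AdjoinRoot.mk_self]⟩
  have hunit : IsUnit (aeval (AdjoinRoot.root (p ^ n)) (derivative p)) := by
    obtain ⟨a, b, hab⟩ := hp.pow_left (m := n)
    refine IsUnit.of_mul_eq_one_right (AdjoinRoot.mk _ b) ?_
    simpa [AdjoinRoot.aeval_eq, AdjoinRoot.mk_self] using congrArg (AdjoinRoot.mk (p ^ n)) hab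
  exact (existsUnique_nilpotent_sub_and_aeval_eq_zero hnil hunit).exists

end CommRing

section Field

variable {k : Type*} [Field k]

theorem Monic.div_gcd [DecidableEq k] {f : k[X]} (hf : f.Monic) (g : k[X]) :
    (f / gcd f g).Monic := by
  have hg : gcd f g ≠ 0 := by simp [gcd_eq_zero_iff, hf.ne_zero]
  have hgm : (gcd f g).Monic := by simpa [normalize_gcd] using monic_normalize hg
  refine hgm.of_mul_monic_right ?_
  rwa [mul_comm, EuclideanDomain.mul_div_cancel' hg (gcd_dvd_left f g)]

theorem squarefree_div_gcd_derivative [DecidableEq k] {f : k[X]} (hf : f ≠ 0) :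
    Squarefree (f / gcd f (derivative f)) := by
  set g := gcd f (derivative f)
  have hg : g ≠ 0 := by simp [g, gcd_eq_zero_iff, hf]
  have hfg : f / g * g = f := by
    rw [mul_comm, EuclideanDomain.mul_div_cancel' hg (gcd_dvd_left _ _)]
  rw [squarefree_iff_irreducible_sq_not_dvd_of_ne_zero fun h => hf (by rw [← hfg, h, zero_mul])]
  intro q hq hq2
  set m := multiplicity q f
  have hqm : q ^ m ∣ f := pow_multiplicity_dvd q f
  have hqg : q ^ (m - 1) ∣ g :=
    dvd_gcd ((pow_dvd_pow q (Nat.sub_le m 1)).trans hqm) (pow_sub_one_dvd_derivative_of_pow_dvd hqm)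
  refine (FiniteMultiplicity.of_not_isUnit hq.not_isUnit hf).not_pow_dvd_of_multiplicity_lt
    (Nat.lt_succ_self m) ?_
  calc q ^ (m + 1) ∣ q ^ (2 + (m - 1)) := pow_dvd_pow q (by omega)
    _ = q * q * q ^ (m - 1) := by rw [pow_add, sq]
    _ ∣ f / g * g := mul_dvd_mul hq2 hqg
    _ = f := hfg

theorem exists_digits_pow_dvd_comp {p : k[X]} (hsep : p.Separable) (hmon : p.Monic) (n : ℕ) :
    ∃ r : Fin (n - 1) → k[X], (∀ j, (r j).degree < p.degree) ∧
      p ^ n ∣ p.comp (X + ∑ j, r j * p ^ ((j : ℕ) + 1)) := by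
  rcases n.eq_zero_or_pos with rfl | hn
  · exact ⟨Fin.elim0, fun j => j.elim0, by simp⟩
  obtain ⟨s, hnil, hroot⟩ := exists_isNilpotent_root_sub_aeval_eq_zero hsep n
  induction s using AdjoinRoot.induction_on with | ih g => ?_
  obtain ⟨h, hh⟩ : p ∣ g - X := by
    obtain ⟨m, hm⟩ := hnil
    rw [← AdjoinRoot.mk_X, ← map_sub, ← map_pow, AdjoinRoot.mk_eq_zero] at hm
    exact dvd_sub_comm.mp (hsep.squarefree.isRadical m _ ((dvd_pow_self p hn.ne').trans hm))
  obtain ⟨r, hr, hdvd⟩ := exists_digits_pow_dvd_sub hmon (n - 1) h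
  refine ⟨r, hr, ?_⟩
  have hsum : ∑ j, r j * p ^ ((j : ℕ) + 1) = p * ∑ j, r j * p ^ (j : ℕ) := by
    rw [Finset.mul_sum]
    exact Finset.sum_congr rfl fun j _ => by ring
  have hlift :
      AdjoinRoot.mk (p ^ n) (X + ∑ j, r j * p ^ ((j : ℕ) + 1)) = AdjoinRoot.mk _ g := by
    rw [AdjoinRoot.mk_eq_mk, hsum,
      show X + p * ∑ j, r j * p ^ (j : ℕ) - g = -(p * (h - ∑ j, r j * p ^ (j : ℕ))) by
        linear_combination -hh, dvd_neg]
    calc p ^ n = p * p ^ (n - 1) := by rw [← pow_succ', Nat.sub_one_add_one hn.ne']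
      _ ∣ _ := mul_dvd_mul_left p hdvd
  rw [← AdjoinRoot.mk_eq_zero, ← AdjoinRoot.aeval_eq, aeval_comp, AdjoinRoot.aeval_eq, hlift,
    hroot]

end Field

end Polynomial

theorem stmt_8_general {k V : Type*} [Field k] [CharZero k] [DecidableEq k] [AddCommGroup V]
    [Module k V] [FiniteDimensional k V] (A : V →ₗ[k] V) (p : k[X])
    (hp : p = A.charpoly / gcd A.charpoly A.charpoly.derivative)
    (M : ℕ) (hdvd : A.charpoly ∣ p ^ M) :
    ∃ (r : Fin (M - 1) → k[X]) (S : V →ₗ[k] V),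
      (∀ j, (r j).degree < p.degree) ∧
      S = A + ∑ j : Fin (M - 1), aeval A (r j) * (aeval A p) ^ ((j : ℕ) + 1) ∧
      aeval S p = 0 ∧
      (∀ U : Submodule k V, (∀ x ∈ U, S x ∈ U) →
        ∃ W : Submodule k V, (∀ x ∈ W, S x ∈ W) ∧ IsCompl U W) ∧
      Commute S A ∧
      IsNilpotent (A - S) ∧
      (∃ qS : k[X], S = aeval A qS) ∧ (∃ qN : k[X], A - S = aeval A qN) := by
  have hsf : Squarefree p := hp ▸ squarefree_div_gcd_derivative A.charpoly_monic.ne_zero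
  have hmon : p.Monic := hp ▸ A.charpoly_monic.div_gcd _
  obtain ⟨r, hr, hcomp⟩ :=
    exists_digits_pow_dvd_comp (PerfectField.separable_iff_squarefree.mpr hsf) hmon M
  set g : k[X] := X + ∑ j, r j * p ^ ((j : ℕ) + 1) with hg
  have hpg : p ∣ X - g := by
    rw [hg, sub_add_cancel_left, dvd_neg]
    exact Finset.dvd_sum fun j _ => dvd_mul_of_dvd_right (dvd_pow_self p j.val.succ_ne_zero) _
  have hS : aeval (aeval A g) p = 0 := by
    rw [← aeval_comp]
    exact aeval_eq_zero_of_dvd_aeval_eq_zero (hdvd.trans hcomp) A.aeval_self_charpoly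
  have hN : A - aeval A g = aeval A (X - g) := by rw [map_sub, aeval_X]
  refine ⟨r, aeval A g, hr, by simp [g, map_sum], hS, fun U hU => ?_, ?_, ?_, ⟨g, rfl⟩,
    ⟨X - g, hN⟩⟩
  · exact Module.End.isSemisimple_iff.mp
      (Module.End.isSemisimple_of_squarefree_aeval_eq_zero hsf hS) U hU
  · simpa using (Commute.all g X).map (aeval A)
  · refine ⟨M, ?_⟩
    rw [hN, ← map_pow]
    exact aeval_eq_zero_of_dvd_aeval_eq_zero (hdvd.trans (pow_dvd_pow_of_dvd hpg M))
      A.aeval_self_charpoly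

/-- Let `p` be the square-free part of the characteristic polynomial `χ_A`
of `A`, and let `M` be the least positive integer with `χ_A ∣ p ^ M`. Then there are
polynomials `r_1, …, r_(M-1)`, each of degree `< deg p`, such that
`S = A + Σ_{j=1}^{M-1} r_j(A) p(A)^j` satisfies `p(S) = 0`; consequently `S` is semisimple,
`S` commutes with `A`, and `N = A - S` is nilpotent, so `A = S + N` is the Jordan–Chevalley
decomposition of `A`, with both `S` and `N` polynomials in `A`. -/
theorem stmt_8 {k V : Type*} [Field k] [CharZero k] [DecidableEq k] [AddCommGroup V]
    [Module k V] [FiniteDimensional k V] (A : V →ₗ[k] V) (p : k[X])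
    (hp : p = A.charpoly / gcd A.charpoly A.charpoly.derivative)
    (M : ℕ) (hM : 0 < M) (hdvd : A.charpoly ∣ p ^ M)
    (hleast : ∀ M' : ℕ, 0 < M' → A.charpoly ∣ p ^ M' → M ≤ M') :
    ∃ (r : Fin (M - 1) → k[X]) (S : V →ₗ[k] V),
      (∀ j, (r j).degree < p.degree) ∧
      S = A + ∑ j : Fin (M - 1), aeval A (r j) * (aeval A p) ^ ((j : ℕ) + 1) ∧
      aeval S p = 0 ∧
      (∀ U : Submodule k V, (∀ x ∈ U, S x ∈ U) →
        ∃ W : Submodule k V, (∀ x ∈ W, S x ∈ W) ∧ IsCompl U W) ∧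
      Commute S A ∧
      IsNilpotent (A - S) ∧
      (∃ qS : k[X], S = aeval A qS) ∧ (∃ qN : k[X], A - S = aeval A qN) :=
  stmt_8_general A p hp M hdvd
end

section
/- Let V be a finite-dimensional vector space over a field k and let N : V → V be nilpotent. Suppose V has a basis that is a disjoint union of Jordan chains of N. Then for every ℓ ≥ 1, the number of chains of length at least ℓ equals dim ker N^ℓ − dim ker N^{ℓ−1}. In particular the multiset of chain lengths (the Young diagram of N) is the same for every such basis. -/
open Finset Module

lemma aux_card_fin (L m : ℕ) :
    Fintype.card {j : Fin L // L ≤ (j : ℕ) + m} = min m L := by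
  classical
  rw [Fintype.card_subtype]
  have h1 : (Finset.univ.filter fun j : Fin L => L ≤ (j : ℕ) + m).card
      = ∑ j : Fin L, if L ≤ (j : ℕ) + m then 1 else 0 := by
    rw [Finset.card_filter]
  have h2 : (∑ j : Fin L, if L ≤ (j : ℕ) + m then 1 else 0)
      = ∑ j ∈ Finset.range L, if L ≤ j + m then 1 else 0 :=
    Fin.sum_univ_eq_sum_range (fun j => if L ≤ j + m then (1:ℕ) else 0) L
  have h3 : (Finset.range L).filter (fun j => L ≤ j + m) = Finset.Ico (L - m) L := by
    ext j; simp only [Finset.mem_filter, Finset.mem_range, Finset.mem_Ico]; omega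
  rw [h1, h2, ← Finset.card_filter, h3, Nat.card_Ico]
  omega

lemma aux_ker {k V : Type*} [Field k] [AddCommGroup V] [Module k V] [FiniteDimensional k V]
    (N : V →ₗ[k] V) (p : ℕ) (v : Fin p → V) (len : Fin p → ℕ)
    (hchain : ∀ i, (N ^ (len i)) (v i) = 0)
    (hindep : LinearIndependent k
      (fun x : (i : Fin p) × Fin (len i) => (N ^ (x.2 : ℕ)) (v x.1)))
    (hspan : Submodule.span k
      (Set.range fun x : (i : Fin p) × Fin (len i) => (N ^ (x.2 : ℕ)) (v x.1)) = ⊤)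
    (m : ℕ) :
    Module.finrank k (LinearMap.ker (N ^ m)) = ∑ i, min m (len i) := by
  classical
  set b : Basis ((i : Fin p) × Fin (len i)) k V := Basis.mk hindep hspan.ge with hb
  have hbapp : ∀ x : (i : Fin p) × Fin (len i), b x = (N ^ (x.2 : ℕ)) (v x.1) := by
    intro x; rw [hb, Basis.mk_apply]
  have hzero : ∀ (i : Fin p) (t : ℕ), len i ≤ t → (N ^ t) (v i) = 0 := by
    intro i t ht
    obtain ⟨d, rfl⟩ := Nat.exists_eq_add_of_le ht
    rw [add_comm, pow_add, Module.End.mul_apply, hchain, map_zero]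
  set P : ((i : Fin p) × Fin (len i)) → Prop := fun x => len x.1 ≤ (x.2 : ℕ) + m with hP
  have hNbP : ∀ x, P x → (N ^ m) (b x) = 0 := by
    intro x hx
    rw [hbapp, ← Module.End.mul_apply, ← pow_add]
    exact hzero _ _ (by simpa [hP, add_comm] using hx)
  set T := {x : (i : Fin p) × Fin (len i) // ¬ P x} with hT
  have hTlt : ∀ t : T, (t.1.2 : ℕ) + m < len t.1.1 := by
    intro t; have := t.2; simp only [hP, not_le] at this; exact this
  set shift : T → (i : Fin p) × Fin (len i) :=
    fun t => ⟨t.1.1, ⟨(t.1.2 : ℕ) + m, hTlt t⟩⟩ with hshift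
  have hshift_inj : Function.Injective shift := by
    rintro ⟨⟨i, j⟩, h⟩ ⟨⟨i', j'⟩, h'⟩ heq
    simp only [hshift, Sigma.mk.inj_iff] at heq
    obtain ⟨rfl, heq2⟩ := heq
    have h1 : (j : ℕ) + m = (j' : ℕ) + m := congrArg Fin.val (eq_of_heq heq2)
    have h2 : j = j' := Fin.ext (by omega)
    subst h2; rfl
  have hNb : ∀ t : T, (N ^ m) (b t.1) = b (shift t) := by
    intro t
    rw [hbapp, hbapp, ← Module.End.mul_apply, ← pow_add, hshift, add_comm]
  have hli_shift : LinearIndependent k (fun t : T => b (shift t)) :=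
    b.linearIndependent.comp shift hshift_inj
  have hker : LinearMap.ker (N ^ m) =
      Submodule.span k (Set.range fun s : {x // P x} => b s.1) := by
    apply le_antisymm
    · intro w hw
      set c := b.repr w with hc
      have hrepr : (∑ x, c x • b x) = w := b.sum_repr w
      have hsum0 : (∑ t : T, c t.1 • b (shift t)) = 0 := by
        have h1 : (N ^ m) w = ∑ x, c x • (N ^ m) (b x) := by
          rw [← hrepr, map_sum]
          exact Finset.sum_congr rfl fun x _ => map_smul _ _ _
        have h2 : (∑ x, c x • (N ^ m) (b x))
            = ∑ x ∈ Finset.univ.filter (fun x => ¬ P x), c x • (N ^ m) (b x) := by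
          rw [Finset.sum_filter_of_ne]
          intro x _ hne hx
          exact hne (by rw [hNbP x hx, smul_zero])
        have h3 : (∑ x ∈ Finset.univ.filter (fun x => ¬ P x), c x • (N ^ m) (b x))
            = ∑ t : T, c t.1 • (N ^ m) (b t.1) :=
          Finset.sum_subtype _ (fun x => by
            simp only [Finset.mem_filter, Finset.mem_univ, true_and]) _
        have h4 : (∑ t : T, c t.1 • (N ^ m) (b t.1)) = ∑ t : T, c t.1 • b (shift t) :=
          Finset.sum_congr rfl fun t _ => by rw [hNb]
        have : (0 : V) = ∑ t : T, c t.1 • b (shift t) := by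
          rw [← h4, ← h3, ← h2, ← h1]
          exact (LinearMap.mem_ker.mp hw).symm
        exact this.symm
      have hc0 : ∀ t : T, c t.1 = 0 :=
        Fintype.linearIndependent_iff.mp hli_shift _ hsum0
      rw [← hrepr]
      apply Submodule.sum_mem
      intro x _
      by_cases hx : P x
      · exact Submodule.smul_mem _ _ (Submodule.subset_span ⟨⟨x, hx⟩, rfl⟩)
      · rw [hc0 ⟨x, hx⟩, zero_smul]; exact zero_mem _
    · rw [Submodule.span_le]
      rintro _ ⟨s, rfl⟩
      simp only [SetLike.mem_coe, LinearMap.mem_ker]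
      exact hNbP s.1 s.2
  rw [hker]
  have hli : LinearIndependent k (fun s : {x // P x} => b s.1) :=
    b.linearIndependent.comp _ Subtype.val_injective
  rw [finrank_span_eq_card hli]
  have e : {x : (i : Fin p) × Fin (len i) // P x} ≃
      (i : Fin p) × {j : Fin (len i) // len i ≤ (j : ℕ) + m} :=
    { toFun := fun x => ⟨x.1.1, ⟨x.1.2, x.2⟩⟩
      invFun := fun y => ⟨⟨y.1, y.2.1⟩, y.2.2⟩
      left_inv := fun _ => rfl
      right_inv := fun _ => rfl }
  rw [Fintype.card_congr e, Fintype.card_sigma]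
  exact Finset.sum_congr rfl fun i _ => aux_card_fin (len i) m

/-- Suppose a finite-dimensional space `V` has a basis which is a disjoint
union of Jordan chains of a nilpotent map `N` (chain `i` has generating vector `v i` and length
`len i`). Then for every `ℓ ≥ 1` the number of chains of length at least `ℓ` equals
`dim ker N^ℓ - dim ker N^(ℓ-1)`; in particular the multiset of chain lengths (the Young diagram
of `N`) does not depend on the choice of such a basis. -/
theorem stmt_11 {k V : Type*} [Field k] [AddCommGroup V] [Module k V] [FiniteDimensional k V]
    (N : V →ₗ[k] V) (hN : IsNilpotent N) (p : ℕ) (v : Fin p → V) (len : Fin p → ℕ)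
    (hlen : ∀ i, 1 ≤ len i)
    (hchain : ∀ i, (N ^ (len i)) (v i) = 0)
    (hgen : ∀ i, (N ^ (len i - 1)) (v i) ≠ 0)
    (hindep : LinearIndependent k
      (fun x : (i : Fin p) × Fin (len i) => (N ^ (x.2 : ℕ)) (v x.1)))
    (hspan : Submodule.span k
      (Set.range fun x : (i : Fin p) × Fin (len i) => (N ^ (x.2 : ℕ)) (v x.1)) = ⊤) :
    ∀ ℓ : ℕ, 1 ≤ ℓ →
      (Finset.univ.filter fun i : Fin p => ℓ ≤ len i).card =
        Module.finrank k (LinearMap.ker (N ^ ℓ)) -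
          Module.finrank k (LinearMap.ker (N ^ (ℓ - 1))) := by
  intro ℓ hℓ
  rw [aux_ker N p v len hchain hindep hspan ℓ,
    aux_ker N p v len hchain hindep hspan (ℓ - 1)]
  rw [← Finset.sum_tsub_distrib _ (fun i _ => min_le_min (by omega) le_rfl)]
  rw [Finset.card_filter]
  refine Finset.sum_congr rfl fun i _ => ?_
  split <;> omega
end

section
/- Let V be a finite-dimensional vector space over a field k, let N : V → V be a nilpotent linear map, let m ≥ 1, and let F ⊆ V be a nonzero subspace such that N^m F = {0}, the restriction of N^{m−1} to F is injective, and the subspaces F, NF, …, N^{m−1}F are independent. Set U = F ⊕ NF ⊕ ⋯ ⊕ N^{m−1}F. Then U is uniform of height m−1: N^{m−1}U ≠ {0}, N^m U = {0}, and ker N^{m−1} ∩ U = N U. -/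
/-- Let `N` be nilpotent on a finite-dimensional space `V`, `m ≥ 1`, and let
`F` be a nonzero subspace with `N^m F = 0`, the restriction of `N^(m-1)` to `F` injective, and
the subspaces `F, NF, …, N^(m-1)F` independent. Then `U = F ⊕ NF ⊕ ⋯ ⊕ N^(m-1)F` is uniform of
height `m-1`: `N^(m-1) U ≠ 0`, `N^m U = 0`, and `ker N^(m-1) ∩ U = N U`. -/
theorem stmt_15 {k V : Type*} [Field k] [AddCommGroup V] [Module k V] [FiniteDimensional k V]
    (N : V →ₗ[k] V) (hN : IsNilpotent N) (m : ℕ) (hm : 1 ≤ m)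
    (F : Submodule k V) (hF : F ≠ ⊥)
    (hFm : ∀ x ∈ F, (N ^ m) x = 0)
    (hinj : ∀ x ∈ F, (N ^ (m - 1)) x = 0 → x = 0)
    (hindep : iSupIndep (fun i : Fin m => F.map (N ^ (i : ℕ))))
    (U : Submodule k V) (hU : U = ⨆ i : Fin m, F.map (N ^ (i : ℕ))) :
    U.map (N ^ (m - 1)) ≠ ⊥ ∧ U.map (N ^ m) = ⊥ ∧
      LinearMap.ker (N ^ (m - 1)) ⊓ U = U.map N := by
  classical
  obtain ⟨m', rfl⟩ : ∃ m', m = m' + 1 := ⟨m - 1, by omega⟩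
  simp only [Nat.add_sub_cancel] at *
  have hFU : F ≤ U := by
    intro x hx
    rw [hU]
    exact Submodule.mem_iSup_of_mem 0 ⟨x, hx, by simp⟩
  -- N^(m'+1) kills U
  have hUkill : ∀ x ∈ U, (N ^ (m' + 1)) x = 0 := by
    intro x hx
    rw [hU] at hx
    induction hx using Submodule.iSup_induction' with
    | mem i y hy =>
        obtain ⟨z, hz, rfl⟩ := hy
        rw [← Module.End.mul_apply, ← pow_add, add_comm, pow_add, Module.End.mul_apply,
          hFm z hz, map_zero]
    | zero => simp
    | add x y _ _ hx' hy' => simp [hx', hy']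
  refine ⟨?_, ?_, ?_⟩
  · -- nonzero
    intro h
    obtain ⟨x, hxF, hx0⟩ := Submodule.exists_mem_ne_zero_of_ne_bot hF
    have : (N ^ m') x ∈ U.map (N ^ m') := Submodule.mem_map_of_mem (hFU hxF)
    rw [h, Submodule.mem_bot] at this
    exact hx0 (hinj x hxF this)
  · rw [Submodule.eq_bot_iff]
    rintro y ⟨x, hx, rfl⟩
    exact hUkill x hx
  · apply le_antisymm
    · intro x hx
      obtain ⟨hxker, hxU⟩ := Submodule.mem_inf.mp hx
      rw [hU, Submodule.mem_iSup_iff_exists_finsupp] at hxU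
      obtain ⟨f, hf, rfl⟩ := hxU
      have hvanish : ∀ i : Fin (m' + 1), i ≠ 0 → (N ^ m') (f i) = 0 := by
        intro i hi
        obtain ⟨z, hz, hzz⟩ := hf i
        obtain ⟨j, hj⟩ : ∃ j : ℕ, (i : ℕ) = j + 1 := by
          have : (i : ℕ) ≠ 0 := fun hc => hi (Fin.ext hc)
          exact ⟨(i : ℕ) - 1, by omega⟩
        rw [← hzz, ← Module.End.mul_apply, ← pow_add, hj,
          show m' + (j + 1) = j + (m' + 1) by ring, pow_add, Module.End.mul_apply,
          hFm z hz, map_zero]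
      -- the i = 0 component vanishes
      have h0 : f 0 = 0 := by
        have hf0F : f 0 ∈ F := by
          obtain ⟨z, hz, hzz⟩ := hf 0
          have : f 0 = z := by rw [← hzz]; simp
          rw [this]; exact hz
        refine hinj _ hf0F ?_
        have hker : (N ^ m') (f.sum fun _ xi => xi) = 0 := hxker
        rw [map_finsuppSum, Finsupp.sum_fintype _ _ (fun i => map_zero _)] at hker
        rw [← hker]
        exact (Finset.sum_eq_single 0 (fun i _ hi => hvanish i hi)
          (fun h => absurd (Finset.mem_univ 0) h)).symm
      rw [Finsupp.sum]
      refine Submodule.sum_mem _ fun i hi => ?_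
      by_cases hi0 : i = 0
      · rw [hi0, h0]; exact Submodule.zero_mem _
      · obtain ⟨z, hz, hzz⟩ := hf i
        obtain ⟨j, hj⟩ : ∃ j : ℕ, (i : ℕ) = j + 1 := by
          have : (i : ℕ) ≠ 0 := fun hc => hi0 (Fin.ext hc)
          exact ⟨(i : ℕ) - 1, by omega⟩
        have hjm : j < m' + 1 := by have := i.isLt; omega
        refine ⟨(N ^ j) z, ?_, ?_⟩
        · rw [hU]
          exact Submodule.mem_iSup_of_mem ⟨j, hjm⟩ (Submodule.mem_map_of_mem hz)
        · rw [← hzz, hj, ← Module.End.mul_apply, ← pow_succ']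
    · rintro y ⟨x, hx, rfl⟩
      refine Submodule.mem_inf.mpr ⟨?_, ?_⟩
      · show (N ^ m') (N x) = 0
        rw [← Module.End.mul_apply, ← pow_succ]
        exact hUkill x hx
      · -- N maps U into U
        rw [hU] at hx ⊢
        induction hx using Submodule.iSup_induction' with
        | mem i y hy =>
            obtain ⟨z, hz, rfl⟩ := hy
            by_cases hi : (i : ℕ) + 1 < m' + 1
            · have : N ((N ^ (i : ℕ)) z) = (N ^ ((i : ℕ) + 1)) z := by
                rw [pow_succ', Module.End.mul_apply]
              rw [this]
              exact Submodule.mem_iSup_of_mem (⟨(i : ℕ) + 1, hi⟩ : Fin (m' + 1))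
                (Submodule.mem_map_of_mem hz)
            · have hieq : (i : ℕ) = m' := by have := i.isLt; omega
              have : N ((N ^ (i : ℕ)) z) = 0 := by
                rw [hieq, ← Module.End.mul_apply, ← pow_succ', hFm z hz]
              rw [this]; exact Submodule.zero_mem _
        | zero => simp
        | add a b _ _ ha hb => simpa using add_mem ha hb
end

section
/- Let V be a finite-dimensional vector space over a field k, let S, N : V → V be commuting linear maps with N nilpotent, let m ≥ 1, and let F ⊆ V be an S-invariant subspace such that the restriction of N^i to F is injective for every 0 ≤ i ≤ m−1 and V = F ⊕ NF ⊕ ⋯ ⊕ N^{m−1}F. Then each N^i F is S-invariant and the characteristic polynomial of S on V equals the m-th power of the characteristic polynomial of the restriction of S to F: χ_S = (χ_{S|F})^m. -/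
/-! For each `i < m`, `N ^ i` restricts to an isomorphism `F ≃ N ^ i F` which intertwines `S`,
because `S` commutes with `N`. Transporting one basis of `F` to every summand gives a basis of `V`
in which `S` is block diagonal with `m` copies of the matrix of `S|F`. -/

open Matrix Polynomial Module

namespace Matrix

variable {R ι κ : Type*} [CommRing R] [Fintype ι] [DecidableEq ι] [Fintype κ] [DecidableEq κ]

theorem charmatrix_blockDiagonal (M : ι → Matrix κ κ R) :
    charmatrix (blockDiagonal M) = blockDiagonal fun i => charmatrix (M i) := by
  change _ = blockDiagonal ((fun _ => scalar κ X) - fun i => (C : R →+* R[X]).mapMatrix (M i))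
  simp [charmatrix, blockDiagonal_map _ _ (map_zero C)]

theorem charpoly_blockDiagonal (M : ι → Matrix κ κ R) :
    (blockDiagonal M).charpoly = ∏ i, (M i).charpoly := by
  simp only [Matrix.charpoly, charmatrix_blockDiagonal, det_blockDiagonal]

end Matrix

namespace Submodule

variable {R M M₂ : Type*} [CommRing R] [AddCommGroup M] [Module R M] [AddCommGroup M₂]
  [Module R M₂]

noncomputable def equivMapOfDisjointKer (p : Submodule R M) {g : M →ₗ[R] M₂}
    (hg : Disjoint p (LinearMap.ker g)) : p ≃ₗ[R] p.map g :=
  .ofBijective (g.submoduleMap p)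
    ⟨LinearMap.submoduleMap_injective_of_injOn (LinearMap.disjoint_ker_iff_injOn.mp hg),
      g.submoduleMap_surjective p⟩

end Submodule

namespace LinearMap

variable {R M ι κ : Type*} [CommRing R] [AddCommGroup M] [Module R M] [Free R M]
  [Module.Finite R M] [Fintype ι] [DecidableEq ι] [Fintype κ] [DecidableEq κ]

theorem charpoly_eq_prod_charpoly_restrict {N : ι → Submodule R M} (h : DirectSum.IsInternal N)
    (b : ∀ i, Basis κ R (N i)) [∀ i, Free R (N i)] [∀ i, Module.Finite R (N i)]
    {f : Module.End R M} (hf : ∀ i, Set.MapsTo f (N i) (N i)) :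
    f.charpoly = ∏ i, (f.restrict (hf i)).charpoly := by
  set B := fun i => toMatrix (b i) (b i) (f.restrict (hf i))
  let e : (Σ _ : ι, κ) ≃ κ × ι := (Equiv.sigmaEquivProd ι κ).trans (Equiv.prodComm ι κ)
  calc f.charpoly = (toMatrix (h.collectedBasis b) (h.collectedBasis b) f).charpoly :=
        (charpoly_toMatrix f _).symm
    _ = (reindex e e (blockDiagonal' B)).charpoly := by
        rw [toMatrix_directSum_collectedBasis_eq_blockDiagonal' h h b b hf, charpoly_reindex]
    _ = ∏ i, (B i).charpoly := by
        rw [show reindex e e (blockDiagonal' B) = blockDiagonal B from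
          blockDiagonal'_submatrix_eq_blockDiagonal B, charpoly_blockDiagonal]
    _ = ∏ i, (f.restrict (hf i)).charpoly := by simp only [B, charpoly_toMatrix]

section Commute

variable {R M : Type*} [CommRing R] [AddCommGroup M] [Module R M]
  {f g : Module.End R M} {p : Submodule R M}

theorem mapsTo_map_of_commute (hfg : Commute f g) (hp : Set.MapsTo f p p) :
    Set.MapsTo f (p.map g) (p.map g) := by
  rintro _ ⟨x, hx, rfl⟩
  exact ⟨f x, hp hx, (LinearMap.congr_fun hfg.eq x).symm⟩

theorem charpoly_restrict_map_of_commute (hfg : Commute f g) (hp : Set.MapsTo f p p)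
    (hg : Disjoint p (ker g)) [Free R p] [Module.Finite R p] [Free R (p.map g)]
    [Module.Finite R (p.map g)] :
    (f.restrict (mapsTo_map_of_commute hfg hp)).charpoly = (f.restrict hp).charpoly := by
  let e := p.equivMapOfDisjointKer hg
  rw [← e.charpoly_conj (f.restrict hp)]
  congr 1
  ext y
  obtain ⟨x, rfl⟩ := e.surjective y
  simp only [LinearEquiv.conj_apply, LinearMap.comp_apply, LinearEquiv.coe_coe,
    LinearEquiv.symm_apply_apply]
  exact LinearMap.congr_fun hfg.eq x

end Commute

end LinearMap

theorem stmt_16_general {k V : Type*} [Field k] [AddCommGroup V] [Module k V] [FiniteDimensional k V]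
    (S N : V →ₗ[k] V) (hcomm : S ∘ₗ N = N ∘ₗ S) (m : ℕ)
    (F : Submodule k V) (hSF : ∀ x ∈ F, S x ∈ F)
    (hinj : ∀ i : Fin m, ∀ x ∈ F, (N ^ (i : ℕ)) x = 0 → x = 0)
    (hsum : DirectSum.IsInternal (fun i : Fin m => F.map (N ^ (i : ℕ)))) :
    (∀ i : Fin m, ∀ x ∈ F.map (N ^ (i : ℕ)), S x ∈ F.map (N ^ (i : ℕ))) ∧
      S.charpoly = (S.restrict hSF).charpoly ^ m := by
  have hSN : ∀ i : ℕ, Commute S (N ^ i) := (Commute.pow_right hcomm ·)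
  have hmaps (i : Fin m) : Set.MapsTo S (F.map (N ^ (i : ℕ))) (F.map (N ^ (i : ℕ))) :=
    LinearMap.mapsTo_map_of_commute (hSN i) hSF
  have hdisj (i : Fin m) : Disjoint F (LinearMap.ker (N ^ (i : ℕ))) :=
    Submodule.disjoint_def.mpr (hinj i)
  refine ⟨fun i _ hx => hmaps i hx, ?_⟩
  let b := Free.chooseBasis k F
  rw [LinearMap.charpoly_eq_prod_charpoly_restrict hsum
    (fun i => b.map (F.equivMapOfDisjointKer (hdisj i))) hmaps]
  simp only [LinearMap.charpoly_restrict_map_of_commute (hSN _) hSF (hdisj _),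
    Finset.prod_const, Finset.card_univ, Fintype.card_fin]

/-- Let `S, N` be commuting linear maps on a finite-dimensional space `V`
with `N` nilpotent, `m ≥ 1`, and let `F` be an `S`-invariant subspace such that `N^i` is
injective on `F` for `0 ≤ i ≤ m-1` and `V = F ⊕ NF ⊕ ⋯ ⊕ N^(m-1)F`. Then each `N^i F` is
`S`-invariant and `χ_S = (χ_(S|F))^m`. -/
theorem stmt_16 {k V : Type*} [Field k] [AddCommGroup V] [Module k V] [FiniteDimensional k V]
    (S N : V →ₗ[k] V) (hcomm : S ∘ₗ N = N ∘ₗ S) (hN : IsNilpotent N) (m : ℕ) (hm : 1 ≤ m)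
    (F : Submodule k V) (hSF : ∀ x ∈ F, S x ∈ F)
    (hinj : ∀ i : Fin m, ∀ x ∈ F, (N ^ (i : ℕ)) x = 0 → x = 0)
    (hsum : DirectSum.IsInternal (fun i : Fin m => F.map (N ^ (i : ℕ)))) :
    (∀ i : Fin m, ∀ x ∈ F.map (N ^ (i : ℕ)), S x ∈ F.map (N ^ (i : ℕ))) ∧
      S.charpoly = (S.restrict hSF).charpoly ^ m :=
  stmt_16_general S N hcomm m F hSF hinj hsum
end
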